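/- There exists an infinite squarefree word over the alphabet {0,1,2}. -/
import Mathlib

/-- Thue–Morse sequence: parity of the binary digit sum. -/
def tm : ℕ → Bool
  | 0 => false
  | (n+1) => xor ((n+1) % 2 == 1) (tm ((n+1)/2))
decreasing_by exact Nat.div_lt_self (Nat.succ_pos n) (by norm_num)

lemma tm_double (n : ℕ) : tm (2*n) = tm n := by
  cases n with
  | zero => rfl
  | succ m =>
    show tm (2*m+1+1) = tm (m+1)
    rw [tm]
    have h1 : (2*m+1+1) % 2 = 0 := by omega
    have h2 : (2*m+1+1) / 2 = m+1 := by omega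
    simp [h1, h2]

lemma tm_double' (n : ℕ) : tm (2*n+1) = !(tm n) := by
  show tm (2*n+1) = !(tm n)
  rw [show 2*n+1 = (2*n)+1 from rfl, tm]
  have h1 : (2*n+1) % 2 = 1 := by omega
  have h2 : (2*n+1) / 2 = n := by omega
  simp [h1, h2, Bool.xor_comm]

/-- no three consecutive equal values -/
lemma tm_no3 (m : ℕ) : ¬ (tm m = tm (m+1) ∧ tm (m+1) = tm (m+2)) := by
  rintro ⟨h1, h2⟩
  rcases Nat.even_or_odd m with ⟨a, ha⟩ | ⟨a, ha⟩
  · subst ha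
    rw [show a+a = 2*a by ring] at h1
    rw [tm_double, show 2*a+1 = 2*a+1 from rfl, tm_double'] at h1
    simp at h1
  · subst ha
    rw [show 2*a+1+1 = 2*(a+1) by ring, show 2*a+1+2 = 2*(a+1)+1 by ring,
        tm_double, tm_double'] at h2
    simp at h2

/-- Thue–Morse is overlap-free. -/
theorem tm_no_overlap : ∀ p, 1 ≤ p → ∀ i, ¬ (∀ j ≤ p, tm (i+j) = tm (i+j+p)) := by
  intro p
  induction p using Nat.strong_induction_on with
  | _ p IH =>
    intro hp i H
    rcases Nat.even_or_odd p with ⟨q, hq⟩ | ⟨q, hq⟩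
    · -- p = 2q even
      have hq1 : 1 ≤ q := by omega
      have hqlt : q < p := by omega
      rcases Nat.even_or_odd i with ⟨a, ha⟩ | ⟨a, ha⟩
      · refine IH q hqlt hq1 a ?_
        intro j hj
        have := H (2*j) (by omega)
        rw [show i + 2*j + p = 2*(a+j+q) by omega, show i + 2*j = 2*(a+j) by omega,
            tm_double, tm_double] at this
        exact this
      · refine IH q hqlt hq1 a ?_
        intro j hj
        have := H (2*j) (by omega)
        rw [show i + 2*j + p = 2*(a+j+q)+1 by omega, show i + 2*j = 2*(a+j)+1 by omega,
            tm_double', tm_double'] at this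
        simpa using this
    · -- p = 2q+1 odd
      rcases Nat.eq_or_lt_of_le hp with h1 | h3
      · -- p = 1
        refine tm_no3 i ⟨?_, ?_⟩
        · have := H 0 (by omega); rw [← h1] at this; simpa using this
        · have := H 1 (by omega); rw [← h1] at this
          rw [show i + 1 + 1 = i + 2 by ring] at this; simpa using this
      · -- p ≥ 3, so q ≥ 1
        have hq1 : 1 ≤ q := by omega
        -- each k with i ≤ k ≤ i + p - 1 gives an equal adjacent pair
        have key : ∀ k, i ≤ k → k + 1 ≤ i + p →
            (∀ a, k = 2*a → tm (a+q) = tm (a+q+1)) ∧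
            (∀ a, k = 2*a+1 → tm a = tm (a+1)) := by
          intro k hk1 hk2
          have e1 := H (k - i) (by omega)
          rw [show i + (k-i) + p = k + p by omega, show i + (k-i) = k by omega] at e1
          have e2 := H (k + 1 - i) (by omega)
          rw [show i + (k+1-i) + p = k+1+p by omega, show i + (k+1-i) = k+1 by omega] at e2
          constructor
          · intro a hka
            subst hka
            rw [show 2*a + p = 2*(a+q)+1 by omega, tm_double, tm_double'] at e1
            rw [show 2*a + 1 + p = 2*(a+q+1) by omega, tm_double', tm_double] at e2
            -- e1 : tm a = !tm (a+q),  e2 : !tm a = tm (a+q+1)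
            rw [e1] at e2
            simp at e2
            exact e2
          · intro a hka
            subst hka
            rw [show 2*a + 1 + p = 2*(a+q+1) by omega, tm_double', tm_double] at e1
            rw [show 2*a+1+1+p = 2*(a+1)+p by omega, show 2*a + 1 + 1 = 2*(a+1) by omega, show 2*(a+1)+p = 2*(a+q+1)+1 by omega,
                tm_double, tm_double'] at e2
            -- e1 : !tm a = tm (a+q+1), e2 : tm (a+1) = !tm (a+q+1)
            rw [← e1] at e2
            simp at e2
            exact e2.symm
        rcases Nat.even_or_odd i with ⟨a, ha⟩ | ⟨a, ha⟩
        · have k1 := (key i (le_refl i) (by omega)).1 a (by omega)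
          have k2 := (key (i+2) (by omega) (by omega)).1 (a+1) (by omega)
          exact tm_no3 (a+q) ⟨k1, by rw [show a+q+1 = a+1+q by ring, show a+q+2 = a+1+q+1 by ring]; exact k2⟩
        · have k1 := (key i (le_refl i) (by omega)).2 a (by omega)
          have k2 := (key (i+2) (by omega) (by omega)).2 (a+1) (by omega)
          exact tm_no3 a ⟨k1, k2⟩

/-- The ternary word: encodes tm (n+1) - tm n, shifted to {0,1,2}. -/
def tw (n : ℕ) : Fin 3 :=
  if tm n = tm (n+1) then 1 else if tm n then 0 else 2

def T (n : ℕ) : ℤ := if tm n then 1 else 0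

lemma T_range (n : ℕ) : T n = 0 ∨ T n = 1 := by
  unfold T; split <;> simp

lemma tw_inj {a b : ℕ} (h : tw a = tw b) :
    T (a+1) - T a = T (b+1) - T b := by
  unfold tw at h
  unfold T
  rcases ha : tm a <;> rcases ha1 : tm (a+1) <;> rcases hb : tm b <;> rcases hb1 : tm (b+1) <;>
    simp [ha, ha1, hb, hb1] at h ⊢

lemma T_eq {a b : ℕ} (h : T a = T b) : tm a = tm b := by
  unfold T at h
  rcases ha : tm a <;> rcases hb : tm b <;> simp [ha, hb] at h ⊢



def Occurs (u w : List (Fin 3)) : Prop := u <:+: w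

def SqFree (w : List (Fin 3)) : Prop :=
  ∀ x : List (Fin 3), x ≠ [] → ¬ Occurs (x ++ x) w

def OccursInf (u : List (Fin 3)) (w : ℕ → Fin 3) : Prop :=
  ∃ i : ℕ, u = (List.range u.length).map (fun j => w (i + j))

def SqFreeInf (w : ℕ → Fin 3) : Prop :=
  ∀ x : List (Fin 3), x ≠ [] → ¬ OccursInf (x ++ x) w


theorem exists_infinite_squarefree_ternary : ∃ w : ℕ → Fin 3, SqFreeInf w := by
  refine ⟨tw, ?_⟩
  rintro x hx ⟨i, hocc⟩
  set p := x.length with hp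
  have hp1 : 1 ≤ p := List.length_pos_iff.mpr hx
  have hlen : (x ++ x).length = p + p := by simp [hp]
  -- extract letters
  have hget : ∀ j (hj : j < p + p), (x ++ x)[j]'(by omega) = tw (i + j) := by
    intro j hj
    rw [List.getElem_of_eq hocc (by omega), List.getElem_map, List.getElem_range]
  have hper : ∀ j < p, tw (i + j) = tw (i + j + p) := by
    intro j hj
    rw [← hget j (by omega), ← show i + (j + p) = i + j + p by ring,
        ← hget (j+p) (by omega)]
    rw [List.getElem_append_left (by omega), List.getElem_append_right (by omega)]
    congr 1
    omega
  -- constant "height difference"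
  have hE : ∀ j ≤ p, T (i + j + p) - T (i + j) = T (i + p) - T i := by
    intro j
    induction j with
    | zero => simp
    | succ m ih =>
      intro hm
      have h1 := ih (by omega)
      have h2 := tw_inj (hper m (by omega))
      have e1 : i + m + 1 = i + (m+1) := by ring
      have e2 : i + m + p + 1 = i + (m+1) + p := by ring
      rw [e1, e2] at h2
      linarith
  have hE0 : T (i + p) - T i = 0 := by
    have h1 := hE p (le_refl p)
    have e : i + p + p = i + (p + p) := by ring
    rcases T_range i with h2 | h2 <;> rcases T_range (i+p) with h3 | h3 <;>
      rcases T_range (i + p + p) with h4 | h4 <;> omega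
  exact tm_no_overlap p hp1 i (fun j hj => T_eq (by have := hE j hj; omega))
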